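/- Let α be a type of semantic-role (SR) tags and σ a type of SSUs equipped with a map sr : σ → α assigning to each SSU its SR tag, and let c : σ → σ → σ be any merging operation satisfying sr (c a b) = sr a for all a b : σ. Define merge : List σ → List σ recursively by merge [] = [], merge [a] = [a], and merge (a :: b :: t) = if sr a = sr b then merge (c a b :: t) else a :: merge (b :: t). Then for every list l : List σ, the merged list merge l contains no two consecutive elements with the same SR tag; i.e., (merge l).Chain' (fun u v => sr u ≠ sr v). -/

import Mathlib

/-!
Merging only ever replaces the head `a` of the remaining list by `c a b`, which carries the same
SR tag, so the first SSU of `mergeSSU sr c l` has the SR tag of the first SSU of `l`. Hence when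
`mergeSSU` keeps `a` in front of `mergeSSU sr c (b :: t)` because `sr a ≠ sr b`, the new neighbour
of `a` still differs from it in SR tag.
-/

/-- Merging of consecutive SSUs with the same SR tag. -/
def mergeSSU {α σ : Type*} [DecidableEq α] (sr : σ → α) (c : σ → σ → σ) :
    List σ → List σ
  | [] => []
  | [a] => [a]
  | a :: b :: t =>
    if sr a = sr b then mergeSSU sr c (c a b :: t)
    else a :: mergeSSU sr c (b :: t)
  termination_by l => l.length

theorem map_head?_mergeSSU {α σ : Type*} [DecidableEq α]
    (sr : σ → α) (c : σ → σ → σ) (hc : ∀ a b : σ, sr (c a b) = sr a) (l : List σ) :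
    (mergeSSU sr c l).head?.map sr = l.head?.map sr := by
  induction l using mergeSSU.induct (sr := sr) (c := c) with
  | case1 => rw [mergeSSU]
  | case2 a => rw [mergeSSU]
  | case3 a b t hab ih => simpa [mergeSSU, hab, hc] using ih
  | case4 a b t hab _ => simp [mergeSSU, hab]

/-- Proposition 1: after merging, no two consecutive SSUs have the same SR tag. -/
theorem mergeSSU_chain'_ne {α σ : Type*} [DecidableEq α]
    (sr : σ → α) (c : σ → σ → σ) (hc : ∀ a b : σ, sr (c a b) = sr a)
    (l : List σ) :
    (mergeSSU sr c l).Chain' (fun u v => sr u ≠ sr v) := by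
  induction l using mergeSSU.induct (sr := sr) (c := c) with
  | case1 => rw [mergeSSU]; exact List.IsChain.nil
  | case2 a => rw [mergeSSU]; exact List.IsChain.singleton a
  | case3 a b t hab ih => rwa [mergeSSU, if_pos hab]
  | case4 a b t hab ih =>
    rw [mergeSSU, if_neg hab]
    refine List.isChain_cons.mpr ⟨fun y hy => ?_, ih⟩
    have hy : sr y = sr b := by
      simpa [Option.mem_def.mp hy] using map_head?_mergeSSU sr c hc (b :: t)
    rwa [hy]
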